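/- Let B_{00}, B_{10}, B_{01}, B_{20}, B_{11}, B_{02} ∈ ℂ^{n×n} and let H(λ,μ) ∈ ℂ^{3n×3n} be the linearization H(λ,μ) = [[B_{00},B_{10},B_{01}],[0,−I,0],[0,0,−I]] + λ[[0,B_{20},B_{11}],[I,0,0],[0,0,0]] + μ[[0,0,B_{02}],[0,0,0],[I,0,0]] of the quadratic polynomial matrix Q(λ,μ) = B_{00} + λB_{10} + μB_{01} + λ²B_{20} + λμB_{11} + μ²B_{02}. Then there exists a polynomial P in the two variables λ, μ with complex coefficients and total degree at most 2n such that P(λ,μ) = det H(λ,μ) for all λ, μ ∈ ℂ. In particular, since H(λ,μ) is a 3n×3n linear polynomial matrix, the resulting two-parameter eigenvalue problem has intrinsic dimension at most (2n, 2n) and is singular whenever n ≥ 1 (2n < 3n). -/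
import Mathlib

open Matrix

/-- Build a `3×3` block matrix from a function giving the `n×n` blocks. -/
def blk3 {n : ℕ} (f : Fin 3 → Fin 3 → Matrix (Fin n) (Fin n) ℂ) :
    Matrix (Fin 3 × Fin n) (Fin 3 × Fin n) ℂ :=
  fun p q => f p.1 q.1 p.2 q.2

/-- The quadratic polynomial matrix
`Q(λ,μ) = B₀₀ + λB₁₀ + μB₀₁ + λ²B₂₀ + λμB₁₁ + μ²B₀₂`. -/
def Qmat {n : ℕ} (B00 B10 B01 B20 B11 B02 : Matrix (Fin n) (Fin n) ℂ)
    (l m : ℂ) : Matrix (Fin n) (Fin n) ℂ :=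
  B00 + l • B10 + m • B01 + (l ^ 2) • B20 + (l * m) • B11 + (m ^ 2) • B02

/-- The `3n×3n` linearization
`H(λ,μ) = [[B₀₀,B₁₀,B₀₁],[0,−I,0],[0,0,−I]] + λ[[0,B₂₀,B₁₁],[I,0,0],[0,0,0]]
 + μ[[0,0,B₀₂],[0,0,0],[I,0,0]]`. -/
def Hmat {n : ℕ} (B00 B10 B01 B20 B11 B02 : Matrix (Fin n) (Fin n) ℂ)
    (l m : ℂ) : Matrix (Fin 3 × Fin n) (Fin 3 × Fin n) ℂ :=
  blk3 ![![B00, B10, B01], ![0, -1, 0], ![0, 0, -1]]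
    + l • blk3 ![![0, B20, B11], ![1, 0, 0], ![0, 0, 0]]
    + m • blk3 ![![0, 0, B02], ![0, 0, 0], ![1, 0, 0]]

def sum3Equiv (n : ℕ) : (Fin n ⊕ Fin n ⊕ Fin n) ≃ (Fin 3 × Fin n) where
  toFun := Sum.elim (fun i => (0, i)) (Sum.elim (fun i => (1, i)) (fun i => (2, i)))
  invFun p := ![Sum.inl, fun i => Sum.inr (Sum.inl i), fun i => Sum.inr (Sum.inr i)] p.1 p.2
  left_inv s := by rcases s with i | i | i <;> rfl
  right_inv p := by obtain ⟨a, i⟩ := p; fin_cases a <;> rfl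

lemma blk3_mul {n : ℕ} (f g : Fin 3 → Fin 3 → Matrix (Fin n) (Fin n) ℂ) :
    blk3 f * blk3 g = blk3 fun a b => ∑ c, f a c * g c b := by
  ext ⟨a, i⟩ ⟨b, j⟩
  simp [blk3, Matrix.mul_apply, Fintype.sum_prod_type, Matrix.sum_apply]

lemma det_blk3_upper {n : ℕ} (f : Fin 3 → Fin 3 → Matrix (Fin n) (Fin n) ℂ)
    (h10 : f 1 0 = 0) (h20 : f 2 0 = 0) (h21 : f 2 1 = 0) :
    (blk3 f).det = (f 0 0).det * ((f 1 1).det * (f 2 2).det) := by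
  rw [← Matrix.det_submatrix_equiv_self (sum3Equiv n) (blk3 f)]
  have h : (blk3 f).submatrix (sum3Equiv n) (sum3Equiv n) =
      Matrix.fromBlocks (f 0 0)
        (Matrix.of fun i s => Sum.elim (fun j => f 0 1 i j) (fun j => f 0 2 i j) s)
        0 (Matrix.fromBlocks (f 1 1) (f 1 2) 0 (f 2 2)) := by
    ext (i | i | i) (j | j | j) <;>
      simp [blk3, sum3Equiv, h10, h20, h21]
  rw [h, Matrix.det_fromBlocks_zero₂₁, Matrix.det_fromBlocks_zero₂₁]

lemma det_blk3_lower {n : ℕ} (f : Fin 3 → Fin 3 → Matrix (Fin n) (Fin n) ℂ)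
    (h01 : f 0 1 = 0) (h02 : f 0 2 = 0) (h12 : f 1 2 = 0) :
    (blk3 f).det = (f 0 0).det * ((f 1 1).det * (f 2 2).det) := by
  rw [← Matrix.det_submatrix_equiv_self (sum3Equiv n) (blk3 f)]
  have h : (blk3 f).submatrix (sum3Equiv n) (sum3Equiv n) =
      Matrix.fromBlocks (f 0 0) 0
        (Matrix.of fun s j => Sum.elim (fun i => f 1 0 i j) (fun i => f 2 0 i j) s)
        (Matrix.fromBlocks (f 1 1) 0 (f 2 1) (f 2 2)) := by
    ext (i | i | i) (j | j | j) <;>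
      simp [blk3, sum3Equiv, h01, h02, h12]
  rw [h, Matrix.det_fromBlocks_zero₁₂, Matrix.det_fromBlocks_zero₁₂]

lemma Hmat_mul_E {n : ℕ} (B00 B10 B01 B20 B11 B02 : Matrix (Fin n) (Fin n) ℂ) (l m : ℂ) :
    Hmat B00 B10 B01 B20 B11 B02 l m *
      blk3 ![![1, 0, 0], ![l • 1, 1, 0], ![m • 1, 0, 1]] =
    blk3 ![![Qmat B00 B10 B01 B20 B11 B02 l m, B10 + l • B20, B01 + l • B11 + m • B02],
           ![0, -1, 0], ![0, 0, -1]] := by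
  have hH : Hmat B00 B10 B01 B20 B11 B02 l m = blk3 fun a b =>
      ![![B00, B10, B01], ![0, -1, 0], ![0, 0, -1]] a b
      + l • ![![0, B20, B11], ![1, 0, 0], ![0, 0, 0]] a b
      + m • ![![0, 0, B02], ![0, 0, 0], ![1, 0, 0]] a b := by
    ext ⟨a, i⟩ ⟨b, j⟩
    simp [Hmat, blk3]
  rw [hH, blk3_mul]
  have key : (fun a b => ∑ c, (![![B00, B10, B01], ![0, -1, 0], ![0, 0, -1]] a c
      + l • ![![0, B20, B11], ![1, 0, 0], ![0, 0, 0]] a c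
      + m • ![![0, 0, B02], ![0, 0, 0], ![1, 0, 0]] a c) *
        ![![1, 0, 0], ![l • 1, 1, 0], ![m • 1, 0, 1]] c b) =
      ![![Qmat B00 B10 B01 B20 B11 B02 l m, B10 + l • B20, B01 + l • B11 + m • B02],
        ![0, -1, 0], ![0, 0, -1]] := by
    funext a b
    fin_cases a <;> fin_cases b <;>
      simp [Fin.sum_univ_three, Qmat, Matrix.mul_smul, Matrix.smul_mul] <;>
      first
      | module
      | simp [Matrix.vecHead, Matrix.vecTail]
  rw [key]

lemma det_Hmat_eq_det_Qmat {n : ℕ}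
    (B00 B10 B01 B20 B11 B02 : Matrix (Fin n) (Fin n) ℂ) (l m : ℂ) :
    (Hmat B00 B10 B01 B20 B11 B02 l m).det = (Qmat B00 B10 B01 B20 B11 B02 l m).det := by
  have hE : (blk3 (n := n) ![![1, 0, 0], ![l • 1, 1, 0], ![m • 1, 0, 1]]).det = 1 := by
    rw [det_blk3_lower _ rfl rfl rfl]
    simp
  have hT : (blk3 ![![Qmat B00 B10 B01 B20 B11 B02 l m, B10 + l • B20,
        B01 + l • B11 + m • B02], ![0, -1, 0], ![0, 0, -1]]).det =
      (Qmat B00 B10 B01 B20 B11 B02 l m).det := by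
    rw [det_blk3_upper _ rfl rfl rfl]
    show (Qmat B00 B10 B01 B20 B11 B02 l m).det *
      ((-1 : Matrix (Fin n) (Fin n) ℂ).det * (-1 : Matrix (Fin n) (Fin n) ℂ).det) = _
    rw [show (-1 : Matrix (Fin n) (Fin n) ℂ) = -(1 : Matrix (Fin n) (Fin n) ℂ) from rfl,
      Matrix.det_neg, Matrix.det_one]
    simp [← mul_pow]
  calc (Hmat B00 B10 B01 B20 B11 B02 l m).det
      = (Hmat B00 B10 B01 B20 B11 B02 l m).det *
          (blk3 (n := n) ![![1, 0, 0], ![l • 1, 1, 0], ![m • 1, 0, 1]]).det := by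
        rw [hE, mul_one]
    _ = (Hmat B00 B10 B01 B20 B11 B02 l m *
          blk3 ![![1, 0, 0], ![l • 1, 1, 0], ![m • 1, 0, 1]]).det := (Matrix.det_mul _ _).symm
    _ = (Qmat B00 B10 B01 B20 B11 B02 l m).det := by rw [Hmat_mul_E, hT]

/-- `det H(λ,μ)` is a polynomial in `(λ,μ)` of total degree at
most `2n`; in particular the linearized two-parameter eigenvalue problem has
intrinsic dimension at most `(2n, 2n)` and is singular whenever `n ≥ 1`
(`2n < 3n`). -/
theorem det_linearization_totalDegree_le_two_n
    {n : ℕ} (B00 B10 B01 B20 B11 B02 : Matrix (Fin n) (Fin n) ℂ) :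
    (∃ P : MvPolynomial (Fin 2) ℂ, P.totalDegree ≤ 2 * n ∧
      ∀ l m : ℂ,
        MvPolynomial.eval ![l, m] P =
          (Hmat B00 B10 B01 B20 B11 B02 l m).det) ∧
      (1 ≤ n → 2 * n < 3 * n) := by
  refine ⟨?_, fun h => by omega⟩
  set M : Matrix (Fin n) (Fin n) (MvPolynomial (Fin 2) ℂ) := Matrix.of fun i j =>
    MvPolynomial.C (B00 i j) + MvPolynomial.C (B10 i j) * MvPolynomial.X 0
      + MvPolynomial.C (B01 i j) * MvPolynomial.X 1
      + MvPolynomial.C (B20 i j) * MvPolynomial.X 0 ^ 2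
      + MvPolynomial.C (B11 i j) * (MvPolynomial.X 0 * MvPolynomial.X 1)
      + MvPolynomial.C (B02 i j) * MvPolynomial.X 1 ^ 2 with hM
  have hMdeg : ∀ i j, (M i j).totalDegree ≤ 2 := by
    intro i j
    have hX : ∀ k : Fin 2, (MvPolynomial.X k : MvPolynomial (Fin 2) ℂ).totalDegree = 1 :=
      fun k => MvPolynomial.totalDegree_X k
    simp only [hM, Matrix.of_apply]
    refine (MvPolynomial.totalDegree_add _ _).trans (max_le ?_ ?_)
    · refine (MvPolynomial.totalDegree_add _ _).trans (max_le ?_ ?_)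
      · refine (MvPolynomial.totalDegree_add _ _).trans (max_le ?_ ?_)
        · refine (MvPolynomial.totalDegree_add _ _).trans (max_le ?_ ?_)
          · refine (MvPolynomial.totalDegree_add _ _).trans (max_le ?_ ?_)
            · simp [MvPolynomial.totalDegree_C]
            · refine (MvPolynomial.totalDegree_mul _ _).trans ?_
              simp [MvPolynomial.totalDegree_C, hX]
          · refine (MvPolynomial.totalDegree_mul _ _).trans ?_
            simp [MvPolynomial.totalDegree_C, hX]
        · refine (MvPolynomial.totalDegree_mul _ _).trans ?_
          have h2 := (MvPolynomial.totalDegree_pow (MvPolynomial.X 0 : MvPolynomial (Fin 2) ℂ) 2)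
          rw [hX 0] at h2
          simp only [MvPolynomial.totalDegree_C, zero_add]
          omega
      · refine (MvPolynomial.totalDegree_mul _ _).trans ?_
        refine le_trans (add_le_add le_rfl (MvPolynomial.totalDegree_mul _ _)) ?_
        simp [MvPolynomial.totalDegree_C, hX]
    · refine (MvPolynomial.totalDegree_mul _ _).trans ?_
      have h2 := (MvPolynomial.totalDegree_pow (MvPolynomial.X 1 : MvPolynomial (Fin 2) ℂ) 2)
      rw [hX 1] at h2
      simp only [MvPolynomial.totalDegree_C, zero_add]
      omega
  refine ⟨M.det, ?_, ?_⟩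
  · rw [Matrix.det_apply]
    refine (MvPolynomial.totalDegree_finset_sum _ _).trans ?_
    refine Finset.sup_le fun σ _ => ?_
    refine (MvPolynomial.totalDegree_smul_le _ _).trans ?_
    refine (MvPolynomial.totalDegree_finset_prod _ _).trans ?_
    calc ∑ i : Fin n, (M (σ i) i).totalDegree ≤ ∑ _i : Fin n, 2 :=
          Finset.sum_le_sum fun i _ => hMdeg _ _
      _ = 2 * n := by simp [mul_comm]
  · intro l m
    rw [det_Hmat_eq_det_Qmat]
    rw [RingHom.map_det (MvPolynomial.eval ![l, m]) M]
    congr 1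
    ext i j
    simp [hM, Qmat, Matrix.map_apply, mul_comm]
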